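/- Let X be a block concatenation subshift determined by alphabet A, lengths (n_k), and word sets (A_k). If for every k, every word of A_{k+1}, written as a concatenation of A_k-words, contains each word of A_k at least once, then X is minimal. -/

import Mathlib

open Filter Topology

/-- The left shift on bi-infinite sequences, as a bijection. -/
def shiftPerm (A : Type) : Equiv.Perm (ℤ → A) where
  toFun x n := x (n + 1)
  invFun x n := x (n - 1)
  left_inv x := funext fun n => by simp
  right_inv x := funext fun n => by simp

/-- A subshift: a closed, shift-invariant subset of the full shift. -/
def IsSubshift {A : Type} [TopologicalSpace A] (X : Set (ℤ → A)) : Prop :=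
  IsClosed X ∧ (shiftPerm A) '' X = X

/-- The word `w` occurs in some point of `X`. -/
def WordIn {A : Type} (X : Set (ℤ → A)) (w : List A) : Prop :=
  ∃ x ∈ X, ∃ i : ℤ, ∀ j : Fin w.length, x (i + ((j : ℕ) : ℤ)) = w.get j

/-- The language of `X`. -/
def language {A : Type} (X : Set (ℤ → A)) : Set (List A) :=
  {w | WordIn X w}

/-- The word complexity function `c_n(X)`: the number of `n`-letter words of `X`. -/
noncomputable def complexity {A : Type} (X : Set (ℤ → A)) (n : ℕ) : ℕ :=
  Nat.card {w : List A // w.length = n ∧ w ∈ language X}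

/-- Minimality: every word of the language occurs in every point of `X`. -/
def IsMinimalSubshift {A : Type} (X : Set (ℤ → A)) : Prop :=
  ∀ w ∈ language X, ∀ x ∈ X, ∃ i : ℤ, ∀ j : Fin w.length, x (i + ((j : ℕ) : ℤ)) = w.get j

/-!
A word `w` of `X` lies in some `A_k`-word `u`. A point `y` of `X` has windows of every length,
each inside some `A_j`-word. Choosing the window longer than every `A_l`-word with `l ≤ k`
forces `j > k`, so the window sits in a concatenation of `A_{k+1}`-words; being also of length
at least `2 n_{k+1} - 1`, it contains one of these blocks entirely, and that block contains `u`,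
hence `w`.
-/

open Computability

namespace List

variable {α : Type*}

theorem drop_take_infix_of_append_eq {p s q l : List α} {a b : ℕ} (h : p ++ s ++ q = l)
    (ha : p.length ≤ a) (hb : b ≤ p.length + s.length) : (l.take b).drop a <:+: s := by
  rcases le_total b a with hba | hab
  · rw [drop_eq_nil_of_le ((length_take_le _ _).trans hba)]
    exact nil_infix
  subst h
  have htake : (p ++ s ++ q).take b = p ++ s.take (b - p.length) := by
    rw [append_assoc, take_append, take_of_length_le (by omega),
      take_append_of_le_length (by omega)]
  rw [htake, drop_append, drop_of_length_le ha, nil_append]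
  exact (drop_suffix _ _).isInfix.trans (take_prefix _ _).isInfix

theorem exists_mem_infix_of_infix_flatten {L : List (List α)} {s : List α} {n : ℕ}
    (hL : ∀ e ∈ L, e.length = n) (hs : s <:+: L.flatten) (hs0 : s ≠ [])
    (hlen : 2 * n ≤ s.length + 1) : ∃ e ∈ L, e <:+: s := by
  obtain ⟨p, q, hpq⟩ := hs
  have hmap : L.map length = replicate L.length n :=
    eq_replicate_iff.2 ⟨length_map _, by simpa using hL⟩
  have hflat : p.length + s.length + q.length = L.length * n := by
    rw [← length_append, ← length_append, hpq, length_flatten, hmap, sum_replicate, smul_eq_mul]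
  have hn : 0 < n := by
    rw [Nat.pos_iff_ne_zero]
    rintro rfl
    exact hs0 (length_eq_zero_iff.1 (by omega))
  -- the first block starting inside `s` is block number `⌈|p| / n⌉`
  have hceil_lt := Nat.lt_div_mul_add (a := p.length + n - 1) hn
  have hceil_le := Nat.div_mul_le_self (p.length + n - 1) n
  set i := (p.length + n - 1) / n
  have hi_start : p.length ≤ i * n := by omega
  have hi_end : i * n + n ≤ p.length + s.length := by omega
  have hi : i < L.length := by
    have : (i + 1) * n ≤ L.length * n := by linarith
    exact Nat.lt_of_succ_le (Nat.le_of_mul_le_mul_right this hn)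
  refine ⟨L[i], getElem_mem hi, ?_⟩
  rw [← drop_take_succ_flatten_eq_getElem L i hi]
  refine drop_take_infix_of_append_eq hpq ?_ ?_
  · simpa [hmap, hi.le] using hi_start
  · simpa [hmap, Nat.succ_le_of_lt hi, add_mul] using hi_end

end List

theorem Language.le_kstar_of_forall_succ_le_kstar {α : Type*} {T : ℕ → Language α} {a : ℕ}
    (hT : ∀ k, a ≤ k → T (k + 1) ≤ (T k)∗) {k : ℕ} (hak : a ≤ k) :
    ∀ j, k ≤ j → T j ≤ (T k)∗ := by
  refine Nat.le_induction le_kstar fun j hkj ih => ?_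
  calc T (j + 1) ≤ (T j)∗ := hT j (hak.trans hkj)
    _ ≤ (T k)∗∗ := kstar_mono ih
    _ = (T k)∗ := kstar_idem _

section Window

variable {A : Type}

def window (x : ℤ → A) (i : ℤ) (m : ℕ) : List A :=
  List.ofFn fun j : Fin m => x (i + ((j : ℕ) : ℤ))

theorem window_length_eq_iff {x : ℤ → A} {i : ℤ} {w : List A} :
    window x i w.length = w ↔ ∀ j : Fin w.length, x (i + ((j : ℕ) : ℤ)) = w.get j := by
  conv_lhs => rhs; rw [← List.ofFn_get w]
  rw [window, List.ofFn_inj, funext_iff]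

theorem window_add (x : ℤ → A) (i : ℤ) (a b : ℕ) :
    window x i (a + b) = window x i a ++ window x (i + a) b := by
  simp only [window, List.ofFn_add, Fin.val_castLE, Fin.val_natAdd]
  congr 2 with j
  push_cast
  ring_nf

theorem exists_window_eq_of_infix {x : ℤ → A} {i : ℤ} {m : ℕ} {w : List A}
    (h : w <:+: window x i m) : ∃ i', window x i' w.length = w := by
  obtain ⟨p, q, hpq⟩ := h
  have hm : m = p.length + w.length + q.length := by
    simpa [window, add_assoc] using (congrArg List.length hpq).symm
  subst hm
  rw [window_add, window_add] at hpq
  obtain ⟨hpw, -⟩ := List.append_inj hpq.symm (by simp [window])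
  exact ⟨_, (List.append_inj hpw (by simp [window])).2⟩

end Window

theorem blockConcat_minimal_general
    {A : Type}
    (nk : ℕ → ℕ) (Ak : ℕ → Set (List A))
    (hlen : ∀ k, 1 ≤ k → ∀ w ∈ Ak k, w.length = nk k)
    (hconcat : ∀ k, 1 ≤ k → ∀ w ∈ Ak (k + 1), ∃ L : List (List A),
      (∀ u ∈ L, u ∈ Ak k) ∧ w = L.flatten ∧ ∀ v ∈ Ak k, v ∈ L)
    (X : Set (ℤ → A))
    (hXdef : X = {x : ℤ → A | ∀ (i : ℤ) (m : ℕ), ∃ k, 1 ≤ k ∧ ∃ w ∈ Ak k,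
      (List.ofFn fun j : Fin m => x (i + ((j : ℕ) : ℤ))) <:+: w}) :
    IsMinimalSubshift X := by
  subst hXdef
  rintro w ⟨x, hx, i, hxw⟩ y hy
  obtain ⟨k, hk, u, hu, hwu⟩ := hx i w.length
  rw [← window, window_length_eq_iff.2 hxw] at hwu
  obtain ⟨j, hj, v, hv, hyv⟩ := hy 0 ((Finset.range (k + 1)).sup nk + 2 * nk (k + 1) + 1)
  rw [← window] at hyv
  have hkj : k + 1 ≤ j := by
    by_contra! hjk
    have := Finset.le_sup (f := nk) (Finset.mem_range.2 hjk)
    have := hyv.length_le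
    simp only [window, List.length_ofFn, hlen j hj v hv] at this
    omega
  obtain ⟨L, rfl, hL⟩ := Language.mem_kstar.1 <|
    Language.le_kstar_of_forall_succ_le_kstar (T := Ak) (a := 1)
      (fun l hl w hw => by
        obtain ⟨L, hL, rfl, -⟩ := hconcat l hl w hw
        exact Language.join_mem_kstar hL)
      (by omega) j hkj hv
  obtain ⟨e, heL, hey⟩ := List.exists_mem_infix_of_infix_flatten
    (fun e he => hlen (k + 1) (by omega) e (hL e he)) hyv
    (by simp [window]) (by simp [window]; omega)
  obtain ⟨Le, -, rfl, hLe⟩ := hconcat k hk e (hL e heL)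
  have hwy : w <:+: window y 0 _ := hwu.trans ((List.infix_of_mem_flatten (hLe u hu)).trans hey)
  obtain ⟨i', hi'⟩ := exists_window_eq_of_infix hwy
  exact ⟨i', window_length_eq_iff.1 hi'⟩

/-- A block concatenation subshift in which every `A_{k+1}`-word,
written as a concatenation of `A_k`-words, contains each `A_k`-word at least once,
is minimal. -/
theorem blockConcat_minimal
    {A : Type} [Finite A]
    (nk : ℕ → ℕ) (Ak : ℕ → Set (List A))
    (h1 : nk 1 = 1)
    (hdiv : ∀ k, 1 ≤ k → nk k ∣ nk (k + 1))
    (hA1 : Ak 1 = {w : List A | w.length = 1})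
    (hlen : ∀ k, 1 ≤ k → ∀ w ∈ Ak k, w.length = nk k)
    (hconcat : ∀ k, 1 ≤ k → ∀ w ∈ Ak (k + 1), ∃ L : List (List A),
      (∀ u ∈ L, u ∈ Ak k) ∧ w = L.flatten ∧ ∀ v ∈ Ak k, v ∈ L)
    (X : Set (ℤ → A))
    (hXdef : X = {x : ℤ → A | ∀ (i : ℤ) (m : ℕ), ∃ k, 1 ≤ k ∧ ∃ w ∈ Ak k,
      (List.ofFn fun j : Fin m => x (i + ((j : ℕ) : ℤ))) <:+: w}) :
    IsMinimalSubshift X :=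
  blockConcat_minimal_general nk Ak hlen hconcat X hXdef
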